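/- arXiv:1007.4131 — 5 statements merged into one kernel-verified Lean document; each statement's English description precedes it below -/
import Mathlib

section
/- Let A be a maximal dissipative operator on a complex Hilbert space H. Then A is injective if and only if its range R(A) is dense in H. -/
open scoped InnerProductSpace

variable {H : Type*} [NormedAddCommGroup H] [InnerProductSpace ℂ H] [CompleteSpace H]

/-- A (possibly unbounded) densely defined operator is dissipative if `Re ⟪Ax, x⟫ ≤ 0`. -/
def Dissipative (A : H →ₗ.[ℂ] H) : Prop :=
  ∀ x : A.domain, (⟪A x, (x : H)⟫_ℂ).re ≤ 0

/-- Maximal dissipative: densely defined, dissipative, with no proper dissipative extension. -/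
def MaximalDissipative (A : H →ₗ.[ℂ] H) : Prop :=
  Dense (A.domain : Set H) ∧ Dissipative A ∧ ∀ B : H →ₗ.[ℂ] H, Dissipative B → A ≤ B → B = A

/-!
For a dissipative `A`, the Hermitian form `q(x, y) = ⟪Ax, y⟫ + ⟪x, Ay⟫` on `D(A)` is negative
semidefinite, so `q(x, x) = 0` forces `q(x, ·) = 0`. Hence a vector of `ker A` is orthogonal to
`R(A)`, and a vector `x ∈ D(A)` orthogonal to `R(A)` has `Ax ⊥ D(A)`, i.e. `Ax = 0` since `D(A)`
is dense. Maximality puts every `x ⊥ R(A)` into `D(A)`: otherwise extending `A` by `x ↦ 0` would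
give a proper dissipative extension.
-/

open scoped ComplexConjugate

theorem nonpos_of_forall_pos_mul_add_sq_mul_nonpos {a b : ℝ}
    (h : ∀ t > 0, t * a + t ^ 2 * b ≤ 0) : a ≤ 0 := by
  by_contra! ha
  have ht : 0 < a / (2 * (|b| + 1)) := by positivity
  have := h _ ht
  field_simp at this
  nlinarith [neg_abs_le b, abs_nonneg b]

theorem re_inner_add_smul_add_smul {E : Type*} [NormedAddCommGroup E] [InnerProductSpace ℂ E]
    (u u' v v' : E) (s : ℂ) :
    (⟪u + s • u', v + s • v'⟫_ℂ).re =
      (⟪u, v⟫_ℂ).re + (s * (⟪u, v'⟫_ℂ + ⟪v, u'⟫_ℂ)).re + ‖s‖ ^ 2 * (⟪u', v'⟫_ℂ).re := by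
  rw [← inner_conj_symm v u']
  simp only [inner_add_left, inner_add_right, inner_smul_left, inner_smul_right,
    Complex.add_re, Complex.add_im, Complex.mul_re, Complex.mul_im, Complex.conj_re,
    Complex.conj_im, Complex.sq_norm, Complex.normSq_apply]
  ring

theorem dense_range_iff_forall_inner_eq_zero {𝕜 M E : Type*} [RCLike 𝕜] [AddCommGroup M]
    [Module 𝕜 M] [NormedAddCommGroup E] [InnerProductSpace 𝕜 E] [CompleteSpace E]
    (f : M →ₗ[𝕜] E) :
    Dense (Set.range f) ↔ ∀ x : E, (∀ y, ⟪f y, x⟫_𝕜 = 0) → x = 0 := by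
  constructor
  · rintro hf x hx
    exact hf.eq_zero_of_inner_right 𝕜 (Set.forall_mem_range.2 hx)
  · intro h
    rw [← LinearMap.coe_range, Submodule.dense_iff_topologicalClosure_eq_top,
      Submodule.topologicalClosure_eq_top_iff, Submodule.eq_bot_iff]
    intro x hx
    exact h x fun y => (Submodule.mem_orthogonal _ x).1 hx _ (LinearMap.mem_range_self f y)

section

variable {E : Type*} [NormedAddCommGroup E] [InnerProductSpace ℂ E] {A : E →ₗ.[ℂ] E}

theorem Dissipative.inner_add_inner_eq_zero (hA : Dissipative A)
    {x : A.domain} (hx : (⟪A x, (x : E)⟫_ℂ).re = 0) (y : A.domain) :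
    ⟪A x, (y : E)⟫_ℂ + ⟪(x : E), A y⟫_ℂ = 0 := by
  set w := ⟪A x, (y : E)⟫_ℂ + ⟪(x : E), A y⟫_ℂ
  suffices ‖w‖ ^ 2 ≤ 0 by simpa using this
  refine nonpos_of_forall_pos_mul_add_sq_mul_nonpos (b := ‖w‖ ^ 2 * (⟪A y, (y : E)⟫_ℂ).re)
    fun t ht => ?_
  -- dissipativity at `x + s • y` with `s = t * conj w`
  have := hA (x + ((t : ℂ) * conj w) • y)
  rw [A.map_add, A.map_smul, Submodule.coe_add, Submodule.coe_smul, re_inner_add_smul_add_smul,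
    hx] at this
  have hre : ((t : ℂ) * conj w * w).re = t * ‖w‖ ^ 2 := by
    rw [mul_assoc, Complex.conj_mul']; norm_cast
  have hnorm : ‖(t : ℂ) * conj w‖ ^ 2 = t ^ 2 * ‖w‖ ^ 2 := by
    rw [norm_mul, Complex.norm_conj, Complex.norm_real, Real.norm_of_nonneg ht.le]; ring
  rw [hre, hnorm] at this
  linarith

theorem Dissipative.inner_map_eq_zero_of_map_eq_zero (hA : Dissipative A) {x : A.domain}
    (hx : A x = 0) (y : A.domain) : ⟪A y, (x : E)⟫_ℂ = 0 := by
  have := hA.inner_add_inner_eq_zero (x := x) (by rw [hx, inner_zero_left, Complex.zero_re]) y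
  rw [hx, inner_zero_left, zero_add] at this
  exact inner_eq_zero_symm.1 this

theorem Dissipative.map_eq_zero_of_forall_inner_map_eq_zero (hA : Dissipative A)
    (hdense : Dense (A.domain : Set E)) {x : A.domain}
    (hx : ∀ y : A.domain, ⟪A y, (x : E)⟫_ℂ = 0) : A x = 0 := by
  refine hdense.eq_zero_of_inner_left ℂ fun v hv => ?_
  have := hA.inner_add_inner_eq_zero (x := x) (by rw [hx x, Complex.zero_re]) ⟨v, hv⟩
  rwa [inner_eq_zero_symm.1 (hx ⟨v, hv⟩), add_zero] at this

theorem Dissipative.supSpanSingleton_zero (hA : Dissipative A) {x : E} (hxA : x ∉ A.domain)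
    (hx : ∀ y : A.domain, ⟪A y, x⟫_ℂ = 0) : Dissipative (A.supSpanSingleton x 0 hxA) := by
  rintro ⟨z, hz⟩
  obtain ⟨u, hu, _, hv, rfl⟩ := Submodule.mem_sup.1 (A.domain_supSpanSingleton x 0 hxA ▸ hz)
  obtain ⟨c, rfl⟩ := Submodule.mem_span_singleton.1 hv
  rw [A.supSpanSingleton_apply_mk x 0 hxA u hu c, smul_zero, add_zero, inner_add_right,
    inner_smul_right, hx, mul_zero, add_zero]
  exact hA ⟨u, hu⟩

theorem MaximalDissipative.mem_domain_of_forall_inner_map_eq_zero (hA : MaximalDissipative A)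
    {x : E} (hx : ∀ y : A.domain, ⟪A y, x⟫_ℂ = 0) : x ∈ A.domain := by
  by_contra hxA
  have hext := hA.2.2 _ (hA.2.1.supSpanSingleton_zero hxA hx) (A.left_le_sup _ _)
  refine hxA (hext ▸ ?_)
  exact Submodule.mem_sup_right (Submodule.mem_span_singleton_self x)

end

theorem maximal_dissipative_injective_iff_denseRange (A : H →ₗ.[ℂ] H)
    (hA : MaximalDissipative A) :
    (∀ x : A.domain, A x = 0 → (x : H) = 0) ↔
      Dense (Set.range fun x : A.domain => A x) := by
  have hdiss : Dissipative A := hA.2.1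
  rw [show (Set.range fun x : A.domain => A x) = Set.range A.toFun from rfl,
    dense_range_iff_forall_inner_eq_zero]
  constructor
  · intro hinj x hx
    have hxA := hA.mem_domain_of_forall_inner_map_eq_zero hx
    exact hinj ⟨x, hxA⟩ (hdiss.map_eq_zero_of_forall_inner_map_eq_zero hA.1 hx)
  · intro h x hx
    exact h x (hdiss.inner_map_eq_zero_of_map_eq_zero hx)
end

section
/- Let H be a Krein space with fundamental symmetry J, and let L be a maximal J-dissipative operator with ker L = {0}. Then the J-adjoint L^c (defined by [Lx, y] = [x, L^c y]) also has trivial kernel. -/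
/-!
A kernel vector `y` of `L^c` satisfies `[L x, y] = 0` for every `x ∈ D(L)`. If `y ∉ D(L)`,
extending `L` by `y ↦ 0` keeps it `J`-dissipative, contradicting maximality; so `y ∈ D(L)`.
Then dissipativity of `x + c y` for all `c ∈ ℂ` forces `[L y, x] = 0` on the dense domain,
hence `L y = 0` and `y = 0`.
-/

open scoped InnerProductSpace

variable {H : Type*} [NormedAddCommGroup H] [InnerProductSpace ℂ H] [CompleteSpace H]

def JDissipative (J : H →L[ℂ] H) (A : H →ₗ.[ℂ] H) : Prop :=
  ∀ x : A.domain, (⟪J (A x), (x : H)⟫_ℂ).re ≤ 0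

def MaximalJDissipative (J : H →L[ℂ] H) (A : H →ₗ.[ℂ] H) : Prop :=
  Dense (A.domain : Set H) ∧ JDissipative J A ∧
    ∀ B : H →ₗ.[ℂ] H, JDissipative J B → A ≤ B → B = A

/-- The conjugated operator `J ∘ T ∘ J`, with domain `{x | J x ∈ D(T)}`. -/
noncomputable def Jconj (J : H →L[ℂ] H) (T : H →ₗ.[ℂ] H) : H →ₗ.[ℂ] H where
  domain := T.domain.comap (J : H →ₗ[ℂ] H)
  toFun :=
  { toFun := fun x => J (T ⟨J (x : H), x.2⟩)
    map_add' := by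
      intro x y
      have h : (⟨J ((x : H) + (y : H)), (x + y).2⟩ : T.domain)
          = ⟨J (x : H), x.2⟩ + ⟨J (y : H), y.2⟩ := by
        apply Subtype.ext; simp
      show J (T ⟨J ((x : H) + (y : H)), (x + y).2⟩) = _
      rw [h, T.map_add, map_add]
    map_smul' := by
      intro c x
      have h : (⟨J (c • (x : H)), (c • x).2⟩ : T.domain)
          = c • (⟨J (x : H), x.2⟩ : T.domain) := by
        apply Subtype.ext; simp
      show J (T ⟨J (c • (x : H)), (c • x).2⟩) = _
      rw [h, T.map_smul, map_smul]
      rfl }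

open scoped ComplexConjugate

theorem Complex.eq_zero_of_forall_re_conj_mul_le {a : ℂ} {r : ℝ}
    (h : ∀ c : ℂ, (conj c * a).re ≤ r) : a = 0 := by
  by_contra ha
  have hc := h (((r + 1) / Complex.normSq a : ℝ) * a)
  rw [map_mul, Complex.conj_ofReal, mul_assoc, ← Complex.normSq_eq_conj_mul_self,
    ← Complex.ofReal_mul, Complex.ofReal_re, div_mul_cancel₀ _ (Complex.normSq_pos.2 ha).ne'] at hc
  linarith

section

variable {E : Type*} [NormedAddCommGroup E] [InnerProductSpace ℂ E]
  {J : E →L[ℂ] E} {A : E →ₗ.[ℂ] E}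

theorem JDissipative.supSpanSingleton (hA : JDissipative J A) {y : E} (hy : y ∉ A.domain)
    (horth : ∀ x : A.domain, ⟪J (A x), y⟫_ℂ = 0) :
    JDissipative J (A.supSpanSingleton y 0 hy) := by
  rintro ⟨u, hu⟩
  obtain ⟨x, hx, _, hc, rfl⟩ := Submodule.mem_sup.mp hu
  obtain ⟨c, rfl⟩ := Submodule.mem_span_singleton.mp hc
  rw [LinearPMap.supSpanSingleton_apply_mk _ _ _ _ _ hx, smul_zero, add_zero]
  simp only [inner_add_right, inner_smul_right, horth ⟨x, hx⟩, mul_zero, add_zero]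
  exact hA ⟨x, hx⟩

theorem JDissipative.inner_apply_eq_zero_of_forall_inner_eq_zero (hA : JDissipative J A)
    (y : A.domain) (horth : ∀ x : A.domain, ⟪J (A x), y⟫_ℂ = 0) (x : A.domain) :
    ⟪J (A y), x⟫_ℂ = 0 := by
  refine Complex.eq_zero_of_forall_re_conj_mul_le (r := -(⟪J (A x), x⟫_ℂ).re) fun c ↦ ?_
  have h := hA (x + c • y)
  rw [LinearPMap.map_add, LinearPMap.map_smul, map_add, map_smul, Submodule.coe_add,
    Submodule.coe_smul] at h
  simp only [inner_add_left, inner_add_right, inner_smul_left, inner_smul_right, horth x,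
    horth y, mul_zero, add_zero, Complex.add_re] at h
  linarith

theorem MaximalJDissipative.mem_domain_of_forall_inner_eq_zero (hA : MaximalJDissipative J A)
    {y : E} (horth : ∀ x : A.domain, ⟪J (A x), y⟫_ℂ = 0) : y ∈ A.domain := by
  by_contra hy
  have hext := hA.2.2 _ (hA.2.1.supSpanSingleton hy horth) (LinearPMap.left_le_sup _ _ _)
  have hmem : y ∈ (A.supSpanSingleton y 0 hy).domain :=
    Submodule.mem_sup_right (Submodule.mem_span_singleton_self y)
  exact hy (hext ▸ hmem)

end

theorem inner_apply_eq_zero_of_jconj_adjoint_apply_eq_zero {J : H →L[ℂ] H}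
    (hJsa : IsSelfAdjoint J) (hJ : Function.Injective J) {L : H →ₗ.[ℂ] H}
    (hL : Dense (L.domain : Set H)) {y : (Jconj J L.adjoint).domain}
    (hy : Jconj J L.adjoint y = 0) (x : L.domain) : ⟪J (L x), y⟫_ℂ = 0 := by
  have hadj : L.adjoint ⟨J y, y.2⟩ = 0 := hJ (hy.trans (map_zero J).symm)
  calc ⟪J (L x), y⟫_ℂ = conj ⟪J y, L x⟫_ℂ := by rw [hJsa.isSymmetric.apply_clm, inner_conj_symm]
    _ = conj ⟪L.adjoint ⟨J y, y.2⟩, x⟫_ℂ := by rw [L.adjoint_isFormalAdjoint hL]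
    _ = 0 := by rw [hadj, inner_zero_left, map_zero]

theorem jadjoint_ker_trivial (J : H →L[ℂ] H)
    (hJsa : IsSelfAdjoint J) (hJ2 : ∀ x : H, J (J x) = x)
    (L : H →ₗ.[ℂ] H) (hL : MaximalJDissipative J L)
    (hker : ∀ x : L.domain, L x = 0 → (x : H) = 0) :
    ∀ y : (Jconj J L.adjoint).domain, (Jconj J L.adjoint) y = 0 → (y : H) = 0 := by
  intro y hy
  have hJ : Function.Injective J := Function.LeftInverse.injective hJ2
  have horth := inner_apply_eq_zero_of_jconj_adjoint_apply_eq_zero hJsa hJ hL.1 hy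
  have hyL : (y : H) ∈ L.domain := hL.mem_domain_of_forall_inner_eq_zero horth
  have hJLy : J (L ⟨y, hyL⟩) = 0 := hL.1.eq_zero_of_inner_left ℂ fun v hv ↦
    hL.2.1.inner_apply_eq_zero_of_forall_inner_eq_zero ⟨y, hyL⟩ horth ⟨v, hv⟩
  exact hker _ (hJ (hJLy.trans (map_zero J).symm))
end

section
/- Let H be a Krein space and L a maximal J-dissipative operator. Suppose M⁺ and M⁻ are closed subspaces invariant under L with H = M⁺ ⊕ M⁻ (direct sum) such that (M⁺ ∩ D(L)) + (M⁻ ∩ D(L)) is dense in D(L) with respect to the graph norm. If iω ∈ ρ(L) for some real ω, then iω ∈ ρ(L|_{M⁺}) and iω ∈ ρ(L|_{M⁻}). -/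
open scoped InnerProductSpace

variable {H : Type*} [NormedAddCommGroup H] [InnerProductSpace ℂ H] [CompleteSpace H]

/-- `R` is the (bounded) resolvent of `A` at `z`, i.e. `R = (A - z)⁻¹`. -/
def ResolventAt (A : H →ₗ.[ℂ] H) (z : ℂ) (R : H →L[ℂ] H) : Prop :=
  (∀ y : H, ∃ hx : R y ∈ A.domain, A ⟨R y, hx⟩ - z • R y = y) ∧
    ∀ x : A.domain, R (A x - z • (x : H)) = (x : H)

/-- `z` belongs to the resolvent set of `A`. -/
def InResolvent (A : H →ₗ.[ℂ] H) (z : ℂ) : Prop :=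
  ∃ R : H →L[ℂ] H, ResolventAt A z R

/-- The closed subspace `M` is invariant under `L`: `D(L) ∩ M` is dense in `M` and
`L` maps `D(L) ∩ M` into `M`. -/
def InvariantUnder (L : H →ₗ.[ℂ] H) (M : Submodule ℂ H) : Prop :=
  Dense {x : M | (x : H) ∈ L.domain} ∧
    ∀ x : L.domain, (x : H) ∈ M → L x ∈ M

/-- `z` is in the resolvent set of the restriction `L|_M` viewed as an operator in `M`. -/
def InResolventRestrict (L : H →ₗ.[ℂ] H) (M : Submodule ℂ H) (z : ℂ) : Prop :=
  ∃ R : M →L[ℂ] M,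
    (∀ y : M, ∃ hx : (R y : H) ∈ L.domain,
        L ⟨(R y : H), hx⟩ - z • (R y : H) = (y : H)) ∧
    ∀ x : L.domain, ∀ hxM : (x : H) ∈ M, ∀ hm : L x - z • (x : H) ∈ M,
      R ⟨L x - z • (x : H), hm⟩ = ⟨(x : H), hxM⟩


/-!
Let `P` be the bounded projection onto `M⁺` along `M⁻` and `R = (L - iω)⁻¹`. On the core
`(M⁺ ∩ D(L)) + (M⁻ ∩ D(L))` the operator `P` maps into `D(L)` and commutes with `L`, so
`R P (L - iω) x = P x` there. Both sides are continuous in the graph norm, hence the identity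
holds on all of `D(L)`, i.e. `R P = P R`. A bounded operator commuting with `P` leaves its
range `M⁺` and its kernel `M⁻` invariant, so `R` restricts to the resolvents of `L|_{M⁺}` and
`L|_{M⁻}`.
-/

section GraphDense

variable {𝕜 E F G : Type*} [NontriviallyNormedField 𝕜]
  [NormedAddCommGroup E] [NormedSpace 𝕜 E] [NormedAddCommGroup F] [NormedSpace 𝕜 F]
  [NormedAddCommGroup G] [NormedSpace 𝕜 G]

def LinearPMap.GraphDense (L : E →ₗ.[𝕜] F) (S : Set L.domain) : Prop :=
  ∀ x : L.domain, ∀ ε : ℝ, 0 < ε → ∃ s ∈ S, ‖(x : E) - s‖ + ‖L x - L s‖ < ε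

theorem LinearPMap.GraphDense.apply_eq {L : E →ₗ.[𝕜] F} {S : Set L.domain}
    (hS : L.GraphDense S) (A : F →L[𝕜] G) (B : E →L[𝕜] G) (h : ∀ s ∈ S, A (L s) = B s)
    (x : L.domain) : A (L x) = B x := by
  refine eq_of_forall_dist_le fun ε hε => ?_
  set C := ‖A‖ + ‖B‖ + 1
  have hC : 0 < C := by positivity
  obtain ⟨s, hs, hxs⟩ := hS x (ε / C) (by positivity)
  have hdiff : A (L x) - B x = A (L x - L s) - B ((x : E) - s) := by
    rw [A.map_sub, B.map_sub, h s hs]; abel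
  calc dist (A (L x)) (B x) = ‖A (L x - L s) - B ((x : E) - s)‖ := by rw [dist_eq_norm, hdiff]
    _ ≤ ‖A‖ * ‖L x - L s‖ + ‖B‖ * ‖(x : E) - s‖ :=
        (norm_sub_le _ _).trans (add_le_add (A.le_opNorm _) (B.le_opNorm _))
    _ ≤ C * (‖(x : E) - s‖ + ‖L x - L s‖) := by
        nlinarith [norm_nonneg A, norm_nonneg B, norm_nonneg (L x - L s),
          norm_nonneg ((x : E) - s)]
    _ ≤ C * (ε / C) := by gcongr
    _ = ε := mul_div_cancel₀ ε hC.ne'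

end GraphDense

section Projection

variable {𝕜 E : Type*} [NontriviallyNormedField 𝕜] [NormedAddCommGroup E] [NormedSpace 𝕜 E]
  {p q : Submodule 𝕜 E}

theorem Submodule.IsTopCompl.mapsTo_left_of_commute (h : p.IsTopCompl q) {T : E →L[𝕜] E}
    (hT : Commute T (p.projectionL q h)) : Set.MapsTo T p p := fun y hy => by
  have hTy : T (p.projectionL q h y) = p.projectionL q h (T y) := DFunLike.congr_fun hT y
  rwa [projectionL_eq_self_iff h y |>.2 hy, eq_comm, projectionL_eq_self_iff] at hTy

theorem Submodule.IsTopCompl.mapsTo_right_of_commute (h : p.IsTopCompl q) {T : E →L[𝕜] E}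
    (hT : Commute T (p.projectionL q h)) : Set.MapsTo T q q := fun y hy => by
  have hTy : T (p.projectionL q h y) = p.projectionL q h (T y) := DFunLike.congr_fun hT y
  rwa [projectionL_apply_eq_zero_iff h |>.2 hy, map_zero, eq_comm,
    projectionL_apply_eq_zero_iff] at hTy

end Projection

namespace ResolventAt

variable {E : Type*} [NormedAddCommGroup E] [InnerProductSpace ℂ E]
  {L : E →ₗ.[ℂ] E} {z : ℂ} {R : E →L[ℂ] E}

theorem commute_of_graphDense (hR : ResolventAt L z R) (P : E →L[ℂ] E) {S : Set L.domain}
    (hS : L.GraphDense S) (hPS : ∀ s ∈ S, ∃ t : L.domain, (t : E) = P s ∧ L t = P (L s)) :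
    Commute R P := by
  have hcore : ∀ x : L.domain, (R ∘L P) (L x) = (z • (R ∘L P) + P) x := by
    refine hS.apply_eq _ _ fun s hs => ?_
    obtain ⟨t, hts, hLt⟩ := hPS s hs
    have hRt : R (L t - z • (t : E)) = t := hR.2 t
    rw [hLt, hts, map_sub, map_smul] at hRt
    exact eq_add_of_sub_eq' hRt
  refine ContinuousLinearMap.ext fun y => ?_
  obtain ⟨hx, hxy⟩ := hR.1 y
  set x := R y
  change R (P y) = P x
  have hLx : R (P (L ⟨x, hx⟩)) = z • R (P x) + P x := hcore ⟨x, hx⟩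
  rw [← hxy, map_sub, map_smul, map_sub, hLx, map_smul, add_sub_cancel_left]

theorem inResolventRestrict (hR : ResolventAt L z R) {M : Submodule ℂ E}
    (hRM : Set.MapsTo R M M) : InResolventRestrict L M z :=
  ⟨(R ∘L M.subtypeL).codRestrict M fun y => hRM y.2, fun y => hR.1 y,
    fun x _ _ => Subtype.ext (hR.2 x)⟩

end ResolventAt

theorem resolvent_of_restriction_general
    (L : H →ₗ.[ℂ] H)
    (Mp Mm : Submodule ℂ H) (hMpc : IsClosed (Mp : Set H)) (hMmc : IsClosed (Mm : Set H))
    (hinvp : InvariantUnder L Mp) (hinvm : InvariantUnder L Mm)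
    (hinf : Mp ⊓ Mm = ⊥) (hsup : Mp ⊔ Mm = ⊤)
    (hgraphdense : ∀ x : L.domain, ∀ ε : ℝ, 0 < ε →
      ∃ u v : L.domain, (u : H) ∈ Mp ∧ (v : H) ∈ Mm ∧
        ‖(x : H) - ((u : H) + (v : H))‖ + ‖L x - (L u + L v)‖ < ε) :
    ∀ ω : ℝ, InResolvent L (Complex.I * ω) →
      InResolventRestrict L Mp (Complex.I * ω) ∧
        InResolventRestrict L Mm (Complex.I * ω) := by
  rintro ω ⟨R, hR⟩
  have hc : Mp.IsTopCompl Mm := Submodule.IsCompl.isTopCompl_of_isClosed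
    ⟨disjoint_iff.mpr hinf, codisjoint_iff.mpr hsup⟩ hMpc hMmc
  set P := Mp.projectionL Mm hc
  set S : Set L.domain := {s | ∃ u v : L.domain, (u : H) ∈ Mp ∧ (v : H) ∈ Mm ∧ s = u + v}
  have hS : L.GraphDense S := fun x ε hε => by
    obtain ⟨u, v, hu, hv, hlt⟩ := hgraphdense x ε hε
    refine ⟨u + v, ⟨u, v, hu, hv, rfl⟩, ?_⟩
    simpa only [Submodule.coe_add, LinearPMap.map_add] using hlt
  have hP : ∀ a b : H, a ∈ Mp → b ∈ Mm → P (a + b) = a := fun a b ha hb => by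
    rw [map_add, (Submodule.projectionL_eq_self_iff hc a).2 ha,
      (Submodule.projectionL_apply_eq_zero_iff hc).2 hb, add_zero]
  have hcomm := hR.commute_of_graphDense P hS <| by
    rintro _ ⟨u, v, hu, hv, rfl⟩
    refine ⟨u, (hP _ _ hu hv).symm, ?_⟩
    rw [LinearPMap.map_add, hP _ _ (hinvp.2 u hu) (hinvm.2 v hv)]
  exact ⟨hR.inResolventRestrict (hc.mapsTo_left_of_commute hcomm),
    hR.inResolventRestrict (hc.mapsTo_right_of_commute hcomm)⟩

theorem resolvent_of_restriction (J : H →L[ℂ] H)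
    (hJsa : IsSelfAdjoint J) (hJ2 : ∀ x : H, J (J x) = x)
    (L : H →ₗ.[ℂ] H) (hL : MaximalJDissipative J L)
    (Mp Mm : Submodule ℂ H) (hMpc : IsClosed (Mp : Set H)) (hMmc : IsClosed (Mm : Set H))
    (hinvp : InvariantUnder L Mp) (hinvm : InvariantUnder L Mm)
    (hinf : Mp ⊓ Mm = ⊥) (hsup : Mp ⊔ Mm = ⊤)
    (hgraphdense : ∀ x : L.domain, ∀ ε : ℝ, 0 < ε →
      ∃ u v : L.domain, (u : H) ∈ Mp ∧ (v : H) ∈ Mm ∧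
        ‖(x : H) - ((u : H) + (v : H))‖ + ‖L x - (L u + L v)‖ < ε) :
    ∀ ω : ℝ, InResolvent L (Complex.I * ω) →
      InResolventRestrict L Mp (Complex.I * ω) ∧
        InResolventRestrict L Mm (Complex.I * ω) :=
  resolvent_of_restriction_general L Mp Mm hMpc hMmc hinvp hinvm hinf hsup hgraphdense
end

section
/- Let H be a Krein space with fundamental symmetry J, and let M be a maximal uniformly positive closed subspace (there is δ > 0 with [x,x] ≥ δ‖x‖² for x ∈ M, and M is maximal with this property). Then H decomposes as the direct sum H = M ⊕ N where N = M^{[⊥]} (the J-orthogonal complement), N is uniformly negative, and the projection P onto M along N is J-self-adjoint ([Px, y] = [x, Py] for all x, y). -/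
/-!
The form `[x, y] = ⟪J x, y⟫` is coercive on `M`, so the compression of `J` to `M` is invertible
(Lax–Milgram) and yields a bounded projection `P` onto `M` along `M^{[⊥]}`; its
`J`-self-adjointness is formal. Maximality makes `M^{[⊥]}` nonpositive, since a `J`-positive
vector `J`-orthogonal to `M` would enlarge `M`. The bounded projection upgrades nonpositivity to
uniform negativity: for `x ∈ M^{[⊥]}` the vector `z = (1 - P) (J x) ∈ M^{[⊥]}` has `[x, z] = ‖x‖²`
and `‖z‖ ≤ ‖1 - P‖ ‖x‖`, so `[x + t z, x + t z] ≤ 0` at `t = (‖1 - P‖² + 1)⁻¹` gives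
`[x, x] ≤ -t ‖x‖²`.
-/

open scoped InnerProductSpace

variable {H : Type*} [NormedAddCommGroup H] [InnerProductSpace ℂ H] [CompleteSpace H]

def Jorth (J : H →L[ℂ] H) (M : Submodule ℂ H) : Submodule ℂ H where
  carrier := {y | ∀ x ∈ M, ⟪J x, y⟫_ℂ = 0}
  add_mem' := by
    intro a b ha hb x hx
    rw [Set.mem_setOf_eq] at *
    rw [inner_add_right, ha x hx, hb x hx, add_zero]
  zero_mem' := by
    intro x hx
    exact inner_zero_right _
  smul_mem' := by
    intro c a ha x hx
    rw [Set.mem_setOf_eq] at *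
    rw [inner_smul_right, ha x hx, mul_zero]

lemma eq_zero_of_mul_norm_sq_nonpos {E : Type*} [NormedAddCommGroup E] {δ : ℝ} (hδ : 0 < δ)
    {x : E} (h : δ * ‖x‖ ^ 2 ≤ 0) : x = 0 :=
  norm_eq_zero.1 <| pow_eq_zero_iff two_ne_zero |>.1 <|
    le_antisymm (nonpos_of_mul_nonpos_right h hδ) (sq_nonneg _)

theorem ContinuousLinearMap.bijective_of_coercive {𝕜 E : Type*} [RCLike 𝕜]
    [NormedAddCommGroup E] [InnerProductSpace 𝕜 E] [CompleteSpace E] (T : E →L[𝕜] E) {δ : ℝ}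
    (hδ : 0 < δ) (hT : ∀ x, δ * ‖x‖ ^ 2 ≤ RCLike.re ⟪T x, x⟫_𝕜) : Function.Bijective T := by
  have hbelow : ∀ x, ‖x‖ ≤ δ⁻¹ * ‖T x‖ := by
    intro x
    rw [le_inv_mul_iff₀ hδ]
    rcases (norm_nonneg x).eq_or_lt with hx | hx
    · rw [← hx, mul_zero]
      exact norm_nonneg _
    · have := (hT x).trans ((RCLike.re_le_norm _).trans (norm_inner_le_norm (T x) x))
      rw [sq, ← mul_assoc] at this
      exact le_of_mul_le_mul_right this hx
  have hanti : AntilipschitzWith ⟨δ⁻¹, (inv_pos.2 hδ).le⟩ T := T.antilipschitz_of_bound hbelow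
  refine ⟨hanti.injective, ?_⟩
  have hclosed : IsClosed (LinearMap.range (T : E →ₗ[𝕜] E) : Set E) := by
    rw [LinearMap.coe_range]
    exact hanti.isClosed_range T.uniformContinuous
  have : CompleteSpace (LinearMap.range (T : E →ₗ[𝕜] E)) := hclosed.completeSpace_coe
  refine LinearMap.range_eq_top.1 ?_
  rw [← Submodule.orthogonal_eq_bot_iff, Submodule.eq_bot_iff]
  intro y hy
  have h := hT y
  have h0 : ⟪T y, y⟫_𝕜 = 0 :=
    Submodule.inner_right_of_mem_orthogonal (LinearMap.mem_range_self (T : E →ₗ[𝕜] E) y) hy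
  rw [h0, map_zero] at h
  exact eq_zero_of_mul_norm_sq_nonpos hδ h

section Krein

variable {E : Type*} [NormedAddCommGroup E] [InnerProductSpace ℂ E]

def IsUniformlyPositive (J : E →L[ℂ] E) (M : Submodule ℂ E) : Prop :=
  ∃ δ : ℝ, 0 < δ ∧ ∀ x ∈ M, δ * ‖x‖ ^ 2 ≤ (⟪J x, x⟫_ℂ).re

structure IsJOrthogonalProjection (J : E →L[ℂ] E) (M : Submodule ℂ E) (P : E →L[ℂ] E) :
    Prop where
  apply_mem : ∀ y, P y ∈ M
  sub_apply_mem_Jorth : ∀ y, y - P y ∈ Jorth J M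

variable {J : E →L[ℂ] E} {M : Submodule ℂ E}

lemma inner_J_comm (hJ : (J : E →ₗ[ℂ] E).IsSymmetric) (x y : E) : ⟪J x, y⟫_ℂ = ⟪x, J y⟫_ℂ :=
  hJ x y

lemma inner_J_left_eq_conj (hJ : (J : E →ₗ[ℂ] E).IsSymmetric) (x y : E) :
    ⟪J x, y⟫_ℂ = starRingEnd ℂ ⟪J y, x⟫_ℂ := by
  rw [inner_J_comm hJ, inner_conj_symm]

lemma inner_J_eq_zero_of_mem_Jorth (hJ : (J : E →ₗ[ℂ] E).IsSymmetric) {x y : E} (hx : x ∈ M)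
    (hy : y ∈ Jorth J M) : ⟪J y, x⟫_ℂ = 0 := by
  rw [inner_J_left_eq_conj hJ, hy x hx, map_zero]

lemma norm_J_apply (hJ : (J : E →ₗ[ℂ] E).IsSymmetric) (hJ2 : Function.Involutive J) (x : E) :
    ‖J x‖ = ‖x‖ := by
  have h : ‖J x‖ ^ 2 = ‖x‖ ^ 2 := by
    rw [← inner_self_eq_norm_sq (𝕜 := ℂ), ← inner_self_eq_norm_sq (𝕜 := ℂ), inner_J_comm hJ,
      hJ2]
  exact (pow_left_inj₀ (norm_nonneg _) (norm_nonneg _) two_ne_zero).1 h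

lemma re_inner_J_add_smul_self (hJ : (J : E →ₗ[ℂ] E).IsSymmetric) (x z : E) (t : ℝ) :
    (⟪J (x + (t : ℂ) • z), x + (t : ℂ) • z⟫_ℂ).re =
      (⟪J x, x⟫_ℂ).re + 2 * t * (⟪J x, z⟫_ℂ).re + t ^ 2 * (⟪J z, z⟫_ℂ).re := by
  simp only [map_add, map_smul, inner_add_left, inner_add_right, inner_smul_left,
    inner_smul_right, inner_J_left_eq_conj hJ z x, Complex.conj_ofReal, Complex.add_re,
    Complex.re_ofReal_mul, Complex.conj_re]
  ring

lemma IsUniformlyPositive.inf_Jorth_eq_bot (hM : IsUniformlyPositive J M) :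
    M ⊓ Jorth J M = ⊥ := by
  obtain ⟨δ, hδ, hpos⟩ := hM
  refine (Submodule.eq_bot_iff _).2 fun x hx => ?_
  have h := hpos x hx.1
  rw [hx.2 x hx.1, Complex.zero_re] at h
  exact eq_zero_of_mul_norm_sq_nonpos hδ h

lemma IsUniformlyPositive.sup (hJ : (J : E →ₗ[ℂ] E).IsSymmetric) {M' : Submodule ℂ E}
    (hM : IsUniformlyPositive J M) (hM' : IsUniformlyPositive J M') (horth : M' ≤ Jorth J M) :
    IsUniformlyPositive J (M ⊔ M') := by
  obtain ⟨δ, hδ, hpos⟩ := hM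
  obtain ⟨δ', hδ', hpos'⟩ := hM'
  set ε := min δ δ'
  refine ⟨ε / 2, by positivity, fun w hw => ?_⟩
  obtain ⟨x, hx, x', hx', rfl⟩ := Submodule.mem_sup.1 hw
  have hsplit : ⟪J (x + x'), x + x'⟫_ℂ = ⟪J x, x⟫_ℂ + ⟪J x', x'⟫_ℂ := by
    rw [map_add, inner_add_left, inner_add_right, inner_add_right, horth hx' x hx,
      inner_J_eq_zero_of_mem_Jorth hJ hx (horth hx')]
    ring
  have hnorm : ‖x + x'‖ ^ 2 ≤ 2 * (‖x‖ ^ 2 + ‖x'‖ ^ 2) := by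
    nlinarith [norm_add_le x x', norm_nonneg (x + x'), sq_nonneg (‖x‖ - ‖x'‖)]
  rw [hsplit, Complex.add_re]
  nlinarith [hpos x hx, hpos' x' hx', mul_le_mul_of_nonneg_left hnorm (by positivity : 0 ≤ ε),
    mul_le_mul_of_nonneg_right (min_le_left δ δ') (sq_nonneg ‖x‖),
    mul_le_mul_of_nonneg_right (min_le_right δ δ') (sq_nonneg ‖x'‖)]

lemma isUniformlyPositive_span_singleton {u : E} (hu : 0 < (⟪J u, u⟫_ℂ).re) :
    IsUniformlyPositive J (ℂ ∙ u) := by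
  have hu0 : u ≠ 0 := by
    rintro rfl
    simp at hu
  refine ⟨(⟪J u, u⟫_ℂ).re / ‖u‖ ^ 2, by positivity, fun w hw => le_of_eq ?_⟩
  obtain ⟨c, rfl⟩ := Submodule.mem_span_singleton.1 hw
  rw [map_smul, inner_smul_left, inner_smul_right, ← mul_assoc, Complex.conj_mul',
    ← Complex.ofReal_pow, Complex.re_ofReal_mul, norm_smul]
  field_simp

lemma IsUniformlyPositive.re_inner_J_self_nonpos_of_maximal
    (hJ : (J : E →ₗ[ℂ] E).IsSymmetric) (hM : IsUniformlyPositive J M)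
    (hmax : ∀ M' : Submodule ℂ E, M ≤ M' → IsUniformlyPositive J M' → M' = M) :
    ∀ u ∈ Jorth J M, (⟪J u, u⟫_ℂ).re ≤ 0 := by
  intro u hu
  by_contra! hpos
  have hext : M ⊔ ℂ ∙ u = M := hmax _ le_sup_left <| hM.sup hJ
    (isUniformlyPositive_span_singleton hpos) ((Submodule.span_singleton_le_iff_mem _ _).2 hu)
  have huM : u ∈ M := hext ▸ Submodule.mem_sup_right (Submodule.mem_span_singleton_self u)
  have hu0 : u = 0 := by
    simpa [hM.inf_Jorth_eq_bot] using Submodule.mem_inf.2 ⟨huM, hu⟩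
  simp [hu0] at hpos

lemma IsUniformlyPositive.exists_isJOrthogonalProjection [CompleteSpace E]
    (hJ : (J : E →ₗ[ℂ] E).IsSymmetric) (hM : IsUniformlyPositive J M) (hMc : IsClosed (M : Set E)) :
    ∃ P : E →L[ℂ] E, IsJOrthogonalProjection J M P := by
  obtain ⟨δ, hδ, hpos⟩ := hM
  have : CompleteSpace M := hMc.completeSpace_coe
  set Q := M.orthogonalProjectionOnto
  set A : M →L[ℂ] M := Q ∘L J ∘L M.subtypeL
  have hA : ∀ x y : M, ⟪x, A y⟫_ℂ = ⟪(x : E), J y⟫_ℂ := fun x y =>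
    Submodule.inner_orthogonalProjectionOnto_eq_of_mem_left x _
  have hAbij : Function.Bijective A := A.bijective_of_coercive hδ fun x => by
    rw [← inner_conj_symm, hA, ← inner_J_comm hJ, RCLike.conj_re]
    exact hpos x x.2
  let e := ContinuousLinearEquiv.ofBijective A (LinearMap.ker_eq_bot.2 hAbij.1)
    (LinearMap.range_eq_top.2 hAbij.2)
  -- `P y = A⁻¹ (Q (J y))` is the element of `M` with `[x, P y] = [x, y]` for all `x ∈ M`.
  refine ⟨M.subtypeL ∘L (e.symm : M →L[ℂ] M) ∘L Q ∘L J, fun y => Submodule.coe_mem _,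
    fun y x hx => ?_⟩
  have hAe : A (e.symm (Q (J y))) = Q (J y) := e.apply_symm_apply _
  rw [inner_sub_right, sub_eq_zero]
  calc ⟪J x, y⟫_ℂ = ⟪(⟨x, hx⟩ : M), Q (J y)⟫_ℂ := by
        rw [inner_J_comm hJ, Submodule.inner_orthogonalProjectionOnto_eq_of_mem_left]
    _ = ⟪(⟨x, hx⟩ : M), A (e.symm (Q (J y)))⟫_ℂ := by rw [hAe]
    _ = _ := by rw [hA, ← inner_J_comm hJ]; rfl

namespace IsJOrthogonalProjection

variable {P : E →L[ℂ] E}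

lemma sup_Jorth_eq_top (hP : IsJOrthogonalProjection J M P) : M ⊔ Jorth J M = ⊤ :=
  eq_top_iff.2 fun y _ =>
    Submodule.mem_sup.2
      ⟨P y, hP.apply_mem y, y - P y, hP.sub_apply_mem_Jorth y, add_sub_cancel _ _⟩

lemma apply_of_mem (hP : IsJOrthogonalProjection J M P) (hMN : M ⊓ Jorth J M = ⊥) {x : E}
    (hx : x ∈ M) : P x = x := by
  have h : x - P x ∈ M ⊓ Jorth J M := ⟨sub_mem hx (hP.apply_mem x), hP.sub_apply_mem_Jorth x⟩
  rw [hMN, Submodule.mem_bot, sub_eq_zero] at h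
  exact h.symm

lemma apply_of_mem_Jorth (hP : IsJOrthogonalProjection J M P) (hMN : M ⊓ Jorth J M = ⊥)
    {x : E} (hx : x ∈ Jorth J M) : P x = 0 := by
  have hPx : P x ∈ Jorth J M := by
    simpa using sub_mem hx (hP.sub_apply_mem_Jorth x)
  have h : P x ∈ M ⊓ Jorth J M := ⟨hP.apply_mem x, hPx⟩
  rwa [hMN, Submodule.mem_bot] at h

lemma inner_J_apply_comm (hJ : (J : E →ₗ[ℂ] E).IsSymmetric)
    (hP : IsJOrthogonalProjection J M P) (x y : E) : ⟪J (P x), y⟫_ℂ = ⟪J x, P y⟫_ℂ := by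
  have hy : ⟪J (P x), y - P y⟫_ℂ = 0 := hP.sub_apply_mem_Jorth y (P x) (hP.apply_mem x)
  have hx : ⟪J (x - P x), P y⟫_ℂ = 0 :=
    inner_J_eq_zero_of_mem_Jorth hJ (hP.apply_mem y) (hP.sub_apply_mem_Jorth x)
  rw [inner_sub_right, sub_eq_zero] at hy
  rw [map_sub, inner_sub_left, sub_eq_zero] at hx
  rw [hy, hx]

lemma uniformlyNegative_of_nonpos (hJ : (J : E →ₗ[ℂ] E).IsSymmetric)
    (hJ2 : Function.Involutive J) (hP : IsJOrthogonalProjection J M P)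
    (hneg : ∀ x ∈ Jorth J M, (⟪J x, x⟫_ℂ).re ≤ 0) :
    ∃ δ' : ℝ, 0 < δ' ∧ ∀ x ∈ Jorth J M, (⟪J x, x⟫_ℂ).re ≤ -δ' * ‖x‖ ^ 2 := by
  set K := ‖ContinuousLinearMap.id ℂ E - P‖ ^ 2 + 1
  have hK : 0 < K := by positivity
  refine ⟨K⁻¹, inv_pos.2 hK, fun x hx => ?_⟩
  set z := J x - P (J x)
  have hz : ‖z‖ ^ 2 ≤ K * ‖x‖ ^ 2 := by
    have h := (ContinuousLinearMap.id ℂ E - P).le_opNorm (J x)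
    rw [norm_J_apply hJ hJ2] at h
    calc ‖z‖ ^ 2 ≤ (‖ContinuousLinearMap.id ℂ E - P‖ * ‖x‖) ^ 2 :=
          pow_le_pow_left₀ (norm_nonneg _) h 2
      _ ≤ K * ‖x‖ ^ 2 := by nlinarith [sq_nonneg ‖x‖]
  have hxz : (⟪J x, z⟫_ℂ).re = ‖x‖ ^ 2 := by
    rw [inner_sub_right, inner_J_eq_zero_of_mem_Jorth hJ (hP.apply_mem _) hx, sub_zero,
      ← norm_J_apply hJ hJ2 x]
    exact inner_self_eq_norm_sq (𝕜 := ℂ) (J x)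
  have hzz : -‖z‖ ^ 2 ≤ (⟪J z, z⟫_ℂ).re := by
    have h := (Complex.abs_re_le_norm _).trans (norm_inner_le_norm (𝕜 := ℂ) (J z) z)
    rw [norm_J_apply hJ hJ2, ← sq] at h
    exact neg_le_of_abs_le h
  have hw := hneg (x + ((K⁻¹ : ℝ) : ℂ) • z) (add_mem hx (Submodule.smul_mem _ _
    (hP.sub_apply_mem_Jorth (J x))))
  rw [re_inner_J_add_smul_self hJ, hxz] at hw
  have hKz : K⁻¹ ^ 2 * ‖z‖ ^ 2 ≤ K⁻¹ * ‖x‖ ^ 2 := by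
    calc K⁻¹ ^ 2 * ‖z‖ ^ 2 ≤ K⁻¹ ^ 2 * (K * ‖x‖ ^ 2) := by gcongr
      _ = K⁻¹ * ‖x‖ ^ 2 := by field_simp
  nlinarith [mul_le_mul_of_nonneg_left hzz (sq_nonneg K⁻¹)]

end IsJOrthogonalProjection

end Krein

theorem maximal_uniformly_positive_decomposition (J : H →L[ℂ] H)
    (hJsa : IsSelfAdjoint J) (hJ2 : ∀ x : H, J (J x) = x)
    (M : Submodule ℂ H) (hMc : IsClosed (M : Set H))
    (δ : ℝ) (hδ : 0 < δ) (hpos : ∀ x ∈ M, δ * ‖x‖ ^ 2 ≤ (⟪J x, x⟫_ℂ).re)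
    (hmax : ∀ M' : Submodule ℂ H, M ≤ M' →
      (∃ δ' : ℝ, 0 < δ' ∧ ∀ x ∈ M', δ' * ‖x‖ ^ 2 ≤ (⟪J x, x⟫_ℂ).re) → M' = M) :
    M ⊓ Jorth J M = ⊥ ∧ M ⊔ Jorth J M = ⊤ ∧
      (∃ δ' : ℝ, 0 < δ' ∧ ∀ x ∈ Jorth J M, (⟪J x, x⟫_ℂ).re ≤ -δ' * ‖x‖ ^ 2) ∧
      ∃ P : H →L[ℂ] H, (∀ x ∈ M, P x = x) ∧ (∀ x ∈ Jorth J M, P x = 0) ∧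
        (∀ x : H, P x ∈ M) ∧ ∀ x y : H, ⟪J (P x), y⟫_ℂ = ⟪J x, P y⟫_ℂ := by
  have hM : IsUniformlyPositive J M := ⟨δ, hδ, hpos⟩
  have hMN := hM.inf_Jorth_eq_bot
  obtain ⟨P, hP⟩ := hM.exists_isJOrthogonalProjection hJsa.isSymmetric hMc
  have hneg := hM.re_inner_J_self_nonpos_of_maximal hJsa.isSymmetric hmax
  exact ⟨hMN, hP.sup_Jorth_eq_top, hP.uniformlyNegative_of_nonpos hJsa.isSymmetric hJ2 hneg,
    P, fun _ => hP.apply_of_mem hMN, fun _ => hP.apply_of_mem_Jorth hMN, hP.apply_mem,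
    hP.inner_J_apply_comm hJsa.isSymmetric⟩
end

section
/- Let L be a maximal J-dissipative operator on a Krein space H with 0 ∈ ρ(L), and let M be a closed subspace invariant under L with 0 ∈ ρ(L|_M) such that L⁻¹M ⊆ M. Then the J-adjoint L^c leaves the J-orthogonal complement N = M^{[⊥]} invariant: (L^c)⁻¹ N ⊆ N, and D(L^c) ∩ N is dense in N provided M is uniformly positive and maximal. -/
open scoped InnerProductSpace

variable {H : Type*} [NormedAddCommGroup H] [InnerProductSpace ℂ H] [CompleteSpace H]

/-!
The `J`-adjoint `R^c = J R* J` of `R = L⁻¹` satisfies `[x, R^c y] = [R x, y]`, so `R M ⊆ M` gives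
`R^c N ⊆ N` for `N = M^{[⊥]}`; and `J R^c N = R* J N ⊆ D(L*)` because `R` is a left inverse of `L`.
So it suffices that `R^c N` is dense in `N`. If `w ∈ N` is orthogonal to `R^c N`, then `J R J w`
is orthogonal to `N = (J M)^⊥`, i.e. `R J w ∈ M`; invariance of `M` under `L` gives `J w ∈ M`, and
then `‖w‖² = [J w, w] = 0`.
-/

section JOrthogonal

variable {E : Type*} [NormedAddCommGroup E] [InnerProductSpace ℂ E] {J : E →L[ℂ] E}

theorem Jorth_eq_orthogonal_map (J : E →L[ℂ] E) (M : Submodule ℂ E) :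
    Jorth J M = (M.map (J : E →ₗ[ℂ] E))ᗮ := by
  ext y
  simp [Jorth, Submodule.mem_orthogonal]

theorem isClosed_Jorth (J : E →L[ℂ] E) (M : Submodule ℂ E) : IsClosed (Jorth J M : Set E) := by
  rw [Jorth_eq_orthogonal_map]
  exact Submodule.isClosed_orthogonal _

theorem orthogonal_Jorth [CompleteSpace E] (hJ2 : Function.Involutive J) {M : Submodule ℂ E}
    (hM : IsClosed (M : Set E)) : (Jorth J M)ᗮ = M.comap (J : E →ₗ[ℂ] E) := by
  have hmap : M.map (J : E →ₗ[ℂ] E) = M.comap (J : E →ₗ[ℂ] E) :=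
    Submodule.map_equiv_eq_comap_symm (LinearEquiv.ofInvolutive (J : E →ₗ[ℂ] E) hJ2) M
  rw [Jorth_eq_orthogonal_map, Submodule.orthogonal_orthogonal_eq_closure, hmap]
  exact (hM.preimage J.continuous).submodule_topologicalClosure_eq

theorem eq_zero_of_mem_Jorth_of_apply_mem (hJ2 : Function.Involutive J) {M : Submodule ℂ E}
    {w : E} (hw : w ∈ Jorth J M) (hJw : J w ∈ M) : w = 0 := by
  have h := hw (J w) hJw
  rwa [hJ2 w, inner_self_eq_zero] at h

end JOrthogonal

section JAdjoint

variable {E : Type*} [NormedAddCommGroup E] [InnerProductSpace ℂ E] [CompleteSpace E]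
  {J : E →L[ℂ] E}

noncomputable def jAdjoint (J R : E →L[ℂ] E) : E →L[ℂ] E :=
  J ∘L ContinuousLinearMap.adjoint R ∘L J

theorem adjoint_jAdjoint (hJ : IsSelfAdjoint J) (R : E →L[ℂ] E) :
    ContinuousLinearMap.adjoint (jAdjoint J R) = J ∘L R ∘L J := by
  simp only [jAdjoint, ContinuousLinearMap.adjoint_comp, ContinuousLinearMap.adjoint_adjoint,
    hJ.adjoint_eq, ContinuousLinearMap.comp_assoc]

theorem inner_apply_jAdjoint (hJ : IsSelfAdjoint J) (hJ2 : Function.Involutive J)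
    (R : E →L[ℂ] E) (x y : E) : ⟪J x, jAdjoint J R y⟫_ℂ = ⟪J (R x), y⟫_ℂ := by
  have hJs : ∀ a b, ⟪J a, b⟫_ℂ = ⟪a, J b⟫_ℂ := hJ.isSymmetric
  simp only [jAdjoint, ContinuousLinearMap.comp_apply]
  rw [hJs, hJ2, ContinuousLinearMap.adjoint_inner_right, hJs]

theorem jAdjoint_mem_Jorth (hJ : IsSelfAdjoint J) (hJ2 : Function.Involutive J)
    {R : E →L[ℂ] E} {M : Submodule ℂ E} (hRM : ∀ u ∈ M, R u ∈ M) {y : E} (hy : y ∈ Jorth J M) :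
    jAdjoint J R y ∈ Jorth J M := fun x hx => by
  rw [inner_apply_jAdjoint hJ hJ2]
  exact hy (R x) (hRM x hx)

end JAdjoint

theorem LinearPMap.adjoint_apply_mem_adjoint_domain_of_leftInverse {𝕜 E F : Type*} [RCLike 𝕜]
    [NormedAddCommGroup E] [InnerProductSpace 𝕜 E] [CompleteSpace E]
    [NormedAddCommGroup F] [InnerProductSpace 𝕜 F] [CompleteSpace F]
    {T : E →ₗ.[𝕜] F} {R : F →L[𝕜] E} (hRT : ∀ x : T.domain, R (T x) = x) (v : E) :
    ContinuousLinearMap.adjoint R v ∈ T.adjoint.domain :=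
  T.mem_adjoint_domain_of_exists _ ⟨v, fun x => by
    rw [ContinuousLinearMap.adjoint_inner_left, hRT]⟩

namespace ResolventAt

variable {E : Type*} [NormedAddCommGroup E] [InnerProductSpace ℂ E]
  {A : E →ₗ.[ℂ] E} {R : E →L[ℂ] E}

theorem apply_mem_domain {z : ℂ} (hR : ResolventAt A z R) (y : E) : R y ∈ A.domain :=
  (hR.1 y).1

theorem rightInverse (hR : ResolventAt A 0 R) (y : E) : A ⟨R y, hR.apply_mem_domain y⟩ = y := by
  simpa using (hR.1 y).2

theorem leftInverse (hR : ResolventAt A 0 R) (x : A.domain) : R (A x) = x := by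
  simpa using hR.2 x

theorem mem_of_apply_mem {M : Submodule ℂ E} (hR : ResolventAt A 0 R)
    (hAM : ∀ x : A.domain, (x : E) ∈ M → A x ∈ M) {y : E} (hy : R y ∈ M) : y ∈ M := by
  simpa only [hR.rightInverse] using hAM ⟨R y, hR.apply_mem_domain y⟩ hy

end ResolventAt

section Density

variable {E : Type*} [NormedAddCommGroup E] [InnerProductSpace ℂ E] [CompleteSpace E]
  {J : E →L[ℂ] E} {L : E →ₗ.[ℂ] E} {R : E →L[ℂ] E} {M : Submodule ℂ E}

theorem eq_zero_of_inner_jAdjoint_Jorth_eq_zero (hJ : IsSelfAdjoint J)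
    (hJ2 : Function.Involutive J) (hR : ResolventAt L 0 R) (hM : IsClosed (M : Set E))
    (hLM : ∀ x : L.domain, (x : E) ∈ M → L x ∈ M) {w : E} (hw : w ∈ Jorth J M)
    (horth : ∀ n ∈ Jorth J M, ⟪jAdjoint J R n, w⟫_ℂ = 0) : w = 0 := by
  have hJRJw : J (R (J w)) ∈ (Jorth J M)ᗮ := fun n hn => by
    rw [← horth n hn, ← ContinuousLinearMap.adjoint_inner_right, adjoint_jAdjoint hJ]
    rfl
  rw [orthogonal_Jorth hJ2 hM, Submodule.mem_comap, ContinuousLinearMap.coe_coe, hJ2] at hJRJw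
  exact eq_zero_of_mem_Jorth_of_apply_mem hJ2 hw (hR.mem_of_apply_mem hLM hJRJw)

theorem dense_Jorth_apply_mem_adjoint_domain (hJ : IsSelfAdjoint J)
    (hJ2 : Function.Involutive J) (hR : ResolventAt L 0 R) (hM : IsClosed (M : Set E))
    (hLM : ∀ x : L.domain, (x : E) ∈ M → L x ∈ M) (hRM : ∀ u ∈ M, R u ∈ M) :
    Dense {y : Jorth J M | J (y : E) ∈ L.adjoint.domain} := by
  have := (isClosed_Jorth J M).completeSpace_coe
  let K : Submodule ℂ (Jorth J M) :=
    (L.adjoint.domain.comap (J : E →ₗ[ℂ] E)).comap (Jorth J M).subtype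
  change Dense (K : Set (Jorth J M))
  rw [Submodule.dense_iff_topologicalClosure_eq_top, Submodule.topologicalClosure_eq_top_iff,
    Submodule.eq_bot_iff]
  intro w hw
  refine Subtype.ext (eq_zero_of_inner_jAdjoint_Jorth_eq_zero hJ hJ2 hR hM hLM w.2 fun n hn => ?_)
  have hK : (⟨jAdjoint J R n, jAdjoint_mem_Jorth hJ hJ2 hRM hn⟩ : Jorth J M) ∈ K := by
    change J (J _) ∈ L.adjoint.domain
    rw [hJ2]
    exact L.adjoint_apply_mem_adjoint_domain_of_leftInverse hR.leftInverse _
  exact hw _ hK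

end Density

theorem jadjoint_invariant_subspace_general (J : H →L[ℂ] H)
    (hJsa : IsSelfAdjoint J) (hJ2 : ∀ x : H, J (J x) = x)
    (L : H →ₗ.[ℂ] H)
    (R : H →L[ℂ] H) (hR : ResolventAt L 0 R)
    (M : Submodule ℂ H) (hMc : IsClosed (M : Set H))
    (hinv : ∀ x : L.domain, (x : H) ∈ M → L x ∈ M)
    (hRinv : ∀ u ∈ M, R u ∈ M) :
    (∀ y ∈ Jorth J M, J ((ContinuousLinearMap.adjoint R) (J y)) ∈ Jorth J M) ∧
      ((∃ δ : ℝ, 0 < δ ∧ ∀ x ∈ M, δ * ‖x‖ ^ 2 ≤ (⟪J x, x⟫_ℂ).re) →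
        (∀ M' : Submodule ℂ H, M ≤ M' →
          (∃ δ' : ℝ, 0 < δ' ∧ ∀ x ∈ M', δ' * ‖x‖ ^ 2 ≤ (⟪J x, x⟫_ℂ).re) → M' = M) →
        Dense {y : (Jorth J M) | J (y : H) ∈ L.adjoint.domain}) :=
  ⟨fun _ hy => jAdjoint_mem_Jorth hJsa hJ2 hRinv hy,
    fun _ _ => dense_Jorth_apply_mem_adjoint_domain hJsa hJ2 hR hMc hinv hRinv⟩

theorem jadjoint_invariant_subspace (J : H →L[ℂ] H)
    (hJsa : IsSelfAdjoint J) (hJ2 : ∀ x : H, J (J x) = x)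
    (L : H →ₗ.[ℂ] H) (hL : MaximalJDissipative J L)
    (R : H →L[ℂ] H) (hR : ResolventAt L 0 R)
    (M : Submodule ℂ H) (hMc : IsClosed (M : Set H))
    (hdenseM : Dense {x : M | (x : H) ∈ L.domain})
    (hinv : ∀ x : L.domain, (x : H) ∈ M → L x ∈ M)
    (hRinv : ∀ u ∈ M, R u ∈ M) :
    (∀ y ∈ Jorth J M, J ((ContinuousLinearMap.adjoint R) (J y)) ∈ Jorth J M) ∧
      ((∃ δ : ℝ, 0 < δ ∧ ∀ x ∈ M, δ * ‖x‖ ^ 2 ≤ (⟪J x, x⟫_ℂ).re) →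
        (∀ M' : Submodule ℂ H, M ≤ M' →
          (∃ δ' : ℝ, 0 < δ' ∧ ∀ x ∈ M', δ' * ‖x‖ ^ 2 ≤ (⟪J x, x⟫_ℂ).re) → M' = M) →
        Dense {y : (Jorth J M) | J (y : H) ∈ L.adjoint.domain}) :=
  jadjoint_invariant_subspace_general J hJsa hJ2 L R hR M hMc hinv hRinv
end
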